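/- arXiv:2401.16344 — 8 statements merged into one kernel-verified Lean document; each statement's English description precedes it below -/
import Mathlib

section
/- For all θ in (0, π/2] and all real x, one has 0 ≤ (sinh((π−θ)x)/sinh(πx))² − (sinh(θx)/sinh(πx))² ≤ 1 − 2θ/π, where at x = 0 the quotients are understood as their limits (π−θ)/π and θ/π. -/
/-!
By `sinh² a - sinh² b = sinh (a + b) sinh (a - b)` with `a = (π - θ)x`, `b = θx`, the difference
of squares equals `sinh (r · πx) / sinh (πx)` with `r = 1 - 2θ/π ∈ [0, 1)`, and convexity of `sinh`
on `[0, ∞)` together with `sinh 0 = 0` gives `0 ≤ sinh (r t) ≤ r sinh t` for `t ≥ 0`.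
-/

open Real

theorem Real.convexOn_sinh_Ici : ConvexOn ℝ (Set.Ici 0) sinh :=
  MonotoneOn.convexOn_of_deriv (convex_Ici 0) continuous_sinh.continuousOn
    differentiable_sinh.differentiableOn <| by
      rw [deriv_sinh, interior_Ici]
      intro x hx y hy hxy
      rw [cosh_le_cosh, abs_of_pos hx, abs_of_pos hy]
      exact hxy

theorem Real.sinh_mul_le_mul_sinh {r t : ℝ} (hr₀ : 0 ≤ r) (hr₁ : r ≤ 1) (ht : 0 ≤ t) :
    sinh (r * t) ≤ r * sinh t := by
  simpa using convexOn_sinh_Ici.2 (Set.mem_Ici.2 le_rfl) (Set.mem_Ici.2 ht)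
    (sub_nonneg.2 hr₁) hr₀ (sub_add_cancel 1 r)

theorem Real.sinh_mul_div_sinh_mem_Icc {r : ℝ} (hr₀ : 0 ≤ r) (hr₁ : r ≤ 1) (y : ℝ) :
    sinh (r * y) / sinh y ∈ Set.Icc 0 r := by
  wlog hy : 0 < y generalizing y
  · rcases (not_lt.1 hy).eq_or_lt with rfl | hy
    · simpa using hr₀
    · simpa [mul_neg, sinh_neg, neg_div_neg_eq] using this (-y) (neg_pos.2 hy)
  have hsy := sinh_pos_iff.2 hy
  exact ⟨div_nonneg (sinh_nonneg_iff.2 (by positivity)) hsy.le,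
    (div_le_iff₀ hsy).2 (sinh_mul_le_mul_sinh hr₀ hr₁ hy.le)⟩

theorem Real.sinh_sq_sub_sinh_sq (a b : ℝ) :
    sinh a ^ 2 - sinh b ^ 2 = sinh (a + b) * sinh (a - b) := by
  rw [sinh_add, sinh_sub]
  linear_combination (sinh b ^ 2) * cosh_sq a - (sinh a ^ 2) * cosh_sq b

-- x / 0 = 0 makes this hold even when sinh (a + b) = 0.
theorem Real.div_sinh_add_sq_sub_div_sinh_add_sq (a b : ℝ) :
    (sinh a / sinh (a + b)) ^ 2 - (sinh b / sinh (a + b)) ^ 2 = sinh (a - b) / sinh (a + b) := by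
  rw [div_pow, div_pow, ← sub_div, sinh_sq_sub_sinh_sq, sq]
  rcases eq_or_ne (sinh (a + b)) 0 with h | h
  · simp [h]
  · exact mul_div_mul_left _ _ h

theorem stmt_0 (θ : ℝ) (hθ : θ ∈ Set.Ioc 0 (π/2)) (x : ℝ) :
    0 ≤ (if x = 0 then (π - θ)/π else Real.sinh ((π - θ)*x) / Real.sinh (π*x))^2
        - (if x = 0 then θ/π else Real.sinh (θ*x) / Real.sinh (π*x))^2 ∧
    (if x = 0 then (π - θ)/π else Real.sinh ((π - θ)*x) / Real.sinh (π*x))^2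
        - (if x = 0 then θ/π else Real.sinh (θ*x) / Real.sinh (π*x))^2 ≤ 1 - 2*θ/π := by
  obtain ⟨hθ₀, hθπ⟩ := hθ
  have hr₀ : 0 ≤ 1 - 2 * θ / π := by
    rw [sub_nonneg, div_le_one pi_pos]; linarith
  have hr₁ : 1 - 2 * θ / π ≤ 1 := by
    have := div_pos (mul_pos two_pos hθ₀) pi_pos; linarith
  split_ifs with hx
  · have hlimit : ((π - θ) / π) ^ 2 - (θ / π) ^ 2 = 1 - 2 * θ / π := by
      field_simp; ring
    rw [hlimit]
    exact ⟨hr₀, le_rfl⟩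
  · have hsum : (π - θ) * x + θ * x = π * x := by ring
    have hdiff : (π - θ) * x - θ * x = (1 - 2 * θ / π) * (π * x) := by
      field_simp; ring
    have hquot := div_sinh_add_sq_sub_div_sinh_add_sq ((π - θ) * x) (θ * x)
    rw [hsum, hdiff] at hquot
    rw [hquot]
    exact sinh_mul_div_sinh_mem_Icc hr₀ hr₁ (π * x)
end

section
/- Fix θ in (0, π/2]. The function f_θ(x) = cosh((π−θ)x) − cosh(θx) − (1 − 2θ/π)(cosh(πx) − 1) is nonpositive for all x ≥ 0. -/
/-!
With `u = π x / 2` and `c = 1 - 2θ/π ∈ [0, 1)` the function factors as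
`f_θ(x) = 2 sinh u (sinh (c u) - c sinh u)`, and `sinh (c u) ≤ c sinh u` because `sinh`
is convex on `[0, ∞)` and vanishes at `0`.
-/

open Real Set

namespace Real

theorem convexOn_sinh : ConvexOn ℝ (Ici 0) sinh := by
  refine MonotoneOn.convexOn_of_deriv (convex_Ici 0) continuous_sinh.continuousOn
    differentiable_sinh.differentiableOn ?_
  rw [deriv_sinh, interior_Ici]
  exact cosh_strictMonoOn.monotoneOn.mono Ioi_subset_Ici_self

theorem sinh_mul_le_mul_sinh_s2 {c u : ℝ} (hc₀ : 0 ≤ c) (hc₁ : c ≤ 1) (hu : 0 ≤ u) :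
    sinh (c * u) ≤ c * sinh u := by
  simpa using convexOn_sinh.2 hu self_mem_Ici hc₀ (sub_nonneg.2 hc₁) (add_sub_cancel c 1)

theorem cosh_add_mul_sub_cosh_sub_mul (c u : ℝ) :
    cosh (u + c * u) - cosh (u - c * u) - c * (cosh (2 * u) - 1)
      = 2 * sinh u * (sinh (c * u) - c * sinh u) := by
  rw [cosh_add, cosh_sub, cosh_two_mul, cosh_sq]
  ring

theorem cosh_add_mul_sub_cosh_sub_mul_le {c u : ℝ} (hc₀ : 0 ≤ c) (hc₁ : c ≤ 1) (hu : 0 ≤ u) :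
    cosh (u + c * u) - cosh (u - c * u) ≤ c * (cosh (2 * u) - 1) := by
  have h := mul_nonpos_of_nonneg_of_nonpos (mul_nonneg zero_le_two (sinh_nonneg_iff.2 hu))
    (sub_nonpos.2 (sinh_mul_le_mul_sinh_s2 hc₀ hc₁ hu))
  rw [← cosh_add_mul_sub_cosh_sub_mul] at h
  linarith

end Real

theorem stmt_2 (θ : ℝ) (hθ : θ ∈ Set.Ioc 0 (π/2)) (x : ℝ) (hx : 0 ≤ x) :
    Real.cosh ((π - θ)*x) - Real.cosh (θ*x) - (1 - 2*θ/π) * (Real.cosh (π*x) - 1) ≤ 0 := by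
  obtain ⟨hθ₀, hθ₁⟩ := hθ
  set c := 1 - 2 * θ / π
  set u := π * x / 2
  have hc₀ : 0 ≤ c := by
    rw [sub_nonneg, div_le_one pi_pos]
    linarith
  have hc₁ : c ≤ 1 := by
    have : 0 ≤ 2 * θ / π := by positivity
    linarith
  have hu : 0 ≤ u := by positivity
  have hsum : (π - θ) * x = u + c * u := by simp only [c, u]; field_simp; ring
  have hdiff : θ * x = u - c * u := by simp only [c, u]; field_simp; ring
  have hdouble : π * x = 2 * u := by ring
  rw [hsum, hdiff, hdouble]
  linarith [cosh_add_mul_sub_cosh_sub_mul_le hc₀ hc₁ hu]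
end

section
/- Fix θ in (0, π/2] and let a_n = (π−θ)^n − θ^n − (1 − 2θ/π)·π^n for natural numbers n. Then a_n ≤ 0 for all n ≥ 2. -/
/-! With a = θ and b = π − θ we have 0 ≤ a ≤ b, and (1 − 2θ/π)πⁿ = (b − a)(a + b)ⁿ⁻¹, so the claim is
bⁿ − aⁿ ≤ (b − a)(a + b)ⁿ⁻¹. This follows by induction from
bⁿ⁺¹ − aⁿ⁺¹ = b(bⁿ − aⁿ) + (b − a)aⁿ and aⁿ ≤ a(a + b)ⁿ⁻¹. -/

open Real

theorem pow_succ_sub_pow_succ_le {a b : ℝ} (ha : 0 ≤ a) (hab : a ≤ b) (n : ℕ) :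
    b ^ (n + 1) - a ^ (n + 1) ≤ (b - a) * (a + b) ^ n := by
  induction n with
  | zero => simp
  | succ n ih =>
    have ha_pow : a ^ n ≤ (a + b) ^ n := pow_le_pow_left₀ ha (by linarith) n
    calc b ^ (n + 2) - a ^ (n + 2)
        = b * (b ^ (n + 1) - a ^ (n + 1)) + (b - a) * (a * a ^ n) := by ring
      _ ≤ b * ((b - a) * (a + b) ^ n) + (b - a) * (a * (a + b) ^ n) := by
          have hb : 0 ≤ b := ha.trans hab
          gcongr
      _ = (b - a) * (a + b) ^ (n + 1) := by ring

theorem stmt_3 (θ : ℝ) (hθ : θ ∈ Set.Ioc 0 (π/2)) (n : ℕ) (hn : 2 ≤ n) :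
    (π - θ)^n - θ^n - (1 - 2*θ/π) * π^n ≤ 0 := by
  obtain ⟨hθ_pos, hθ_le⟩ := hθ
  obtain ⟨m, rfl⟩ : ∃ m, n = m + 1 := ⟨n - 1, by omega⟩
  have key := pow_succ_sub_pow_succ_le hθ_pos.le (by linarith : θ ≤ π - θ) m
  have hcoeff : (1 - 2 * θ / π) * π ^ (m + 1) = (π - θ - θ) * (θ + (π - θ)) ^ m := by
    field_simp
    ring
  rw [hcoeff]
  linarith
end

section
/- Let θ ∈ (0, π) and define P̂_θ(z) = sinh((π−θ)z)/sinh(πz) for complex z in the closed strip {z : |Im z| ≤ 1/2}, extended by continuity at z = 0 (value (π−θ)/π) and at the poles. Then for all z in the closed strip, |P̂_θ(z)| ≤ cos(θ/2), with equality achieved exactly at z = ±i/2. -/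
set_option maxHeartbeats 1000000

open Real Complex

noncomputable def Phat (θ : ℝ) (z : ℂ) : ℂ :=
  if z = 0 then ((π - θ)/π : ℂ) else Complex.sinh ((π - θ)*z) / Complex.sinh (π*z)

lemma abs_sinh_sq (w : ℂ) :
    ‖Complex.sinh w‖ ^ 2 = Real.sinh w.re ^ 2 + Real.sin w.im ^ 2 := by
  rw [Complex.sq_norm]
  have h : Complex.sinh w = Complex.sinh ((w.re : ℂ) + (w.im : ℂ) * Complex.I) := by
    rw [Complex.re_add_im]
  rw [h, Complex.sinh_add, Complex.sinh_mul_I, Complex.cosh_mul_I,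
    ← Complex.ofReal_sinh, ← Complex.ofReal_cosh, ← Complex.ofReal_sin, ← Complex.ofReal_cos,
    ← Complex.ofReal_mul, ← mul_assoc, ← Complex.ofReal_mul, Complex.normSq_add_mul_I]
  nlinarith [Real.sin_sq_add_cos_sq w.im, Real.cosh_sq w.re]

lemma chord {t : ℝ} (h1 : 0 < t) (h2 : t < π/2) : 1 - 2*t/π < Real.cos t := by
  have hπ := Real.pi_pos
  have hx : (0:ℝ) ∈ Set.Icc (-(π/2)) (π/2) := by constructor <;> nlinarith
  have hy : (π/2) ∈ Set.Icc (-(π/2)) (π/2) := by constructor <;> nlinarith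
  have hxy : (0:ℝ) ≠ π/2 := ne_of_lt (by positivity)
  have ha : (0:ℝ) < 1 - 2*t/π := by rw [sub_pos, div_lt_one hπ]; nlinarith
  have hb : (0:ℝ) < 2*t/π := by positivity
  have hab : (1 - 2*t/π) + (2*t/π) = 1 := by ring
  have h := strictConcaveOn_cos_Icc.2 hx hy hxy ha hb hab
  have e1 : ((1 - 2*t/π) • (0:ℝ) + (2*t/π) • (π/2)) = t := by
    simp only [smul_eq_mul]; field_simp; ring
  rw [e1] at h
  simpa [smul_eq_mul] using h

lemma sinh_scale_le {c : ℝ} (hc0 : 0 ≤ c) (hc1 : c ≤ 1) {t : ℝ} (ht : 0 ≤ t) :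
    Real.sinh (c * t) ≤ c * Real.sinh t := by
  set g : ℝ → ℝ := fun x => c * Real.sinh x - Real.sinh (c * x) with hg
  have hder : ∀ x : ℝ, HasDerivAt g (c * Real.cosh x - c * Real.cosh (c * x)) x := by
    intro x
    have hid : HasDerivAt (fun y : ℝ => c * y) c x := by
      simpa using (hasDerivAt_id x).const_mul c
    have h1 : HasDerivAt (fun x : ℝ => Real.sinh (c * x)) (Real.cosh (c * x) * c) x :=
      (Real.hasDerivAt_sinh (c * x)).comp x hid
    have h2 := (Real.hasDerivAt_sinh x).const_mul c
    rw [show c * Real.cosh x - c * Real.cosh (c * x) = c * Real.cosh x - Real.cosh (c * x) * c by ring]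
    exact h2.sub h1
  have hmono : MonotoneOn g (Set.Ici 0) := by
    apply monotoneOn_of_deriv_nonneg (convex_Ici 0)
    · exact (Continuous.continuousOn (by continuity))
    · intro x hx
      exact (hder x).differentiableAt.differentiableWithinAt
    · intro x hx
      rw [(hder x).deriv]
      rw [interior_Ici] at hx
      have hx0 : 0 ≤ x := le_of_lt hx
      have : Real.cosh (c * x) ≤ Real.cosh x := by
        rw [Real.cosh_le_cosh, _root_.abs_of_nonneg (by positivity), _root_.abs_of_nonneg hx0]
        nlinarith
      nlinarith
  have := hmono (Set.self_mem_Ici) (by exact ht) ht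
  simpa [hg] using this

lemma lemA {a c : ℝ} (ha : 0 < a) (hc0 : 0 < c) (hc1 : c ≤ 1) (hapc : a < π * c)
    {u : ℝ} (hu : u ≠ 0) : Real.sinh (a*u)^2 < c^2 * Real.sinh (π*u)^2 := by
  have key : ∀ w : ℝ, 0 < w → Real.sinh (a*w)^2 < c^2 * Real.sinh (π*w)^2 := by
    intro w hw
    have h1 : Real.sinh (a*w) < Real.sinh (c*(π*w)) := Real.sinh_lt_sinh.2 (by nlinarith)
    have h2 : Real.sinh (c*(π*w)) ≤ c * Real.sinh (π*w) :=
      sinh_scale_le hc0.le hc1 (by positivity)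
    have h0 : 0 ≤ Real.sinh (a*w) := Real.sinh_nonneg_iff.2 (by positivity)
    have := pow_lt_pow_left₀ (h1.trans_le h2) h0 two_ne_zero
    calc Real.sinh (a*w)^2 < (c * Real.sinh (π*w))^2 := this
    _ = c^2 * Real.sinh (π*w)^2 := by ring
  rcases lt_or_gt_of_ne hu with h | h
  · have := key (-u) (by linarith)
    simpa [mul_neg, Real.sinh_neg] using this
  · exact key u h

lemma lemB {a c : ℝ} (ha : 0 < a) (haπ : a < π) (hc0 : 0 < c) (hc1 : c ≤ 1)
    (hapc : a < π * c) (hhalf : Real.sin (a/2) = c)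
    {v : ℝ} (hv0 : 0 < v) (hv2 : v < 1/2) : Real.sin (a*v) < c * Real.sin (π*v) := by
  have hπ := Real.pi_pos
  set F : ℝ → ℝ := fun x => c * Real.sin (π*x) - Real.sin (a*x) with hF
  have hF' : ∀ x : ℝ, HasDerivAt F (c * (Real.cos (π*x) * π) - Real.cos (a*x) * a) x := by
    intro x
    have hπx : HasDerivAt (fun y : ℝ => π * y) π x := by
      simpa using (hasDerivAt_id x).const_mul π
    have hax : HasDerivAt (fun y : ℝ => a * y) a x := by
      simpa using (hasDerivAt_id x).const_mul a
    exact (((Real.hasDerivAt_sin (π*x)).comp x hπx).const_mul c).sub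
      ((Real.hasDerivAt_sin (a*x)).comp x hax)
  have hderivF : deriv F = fun x => c * (Real.cos (π*x) * π) - Real.cos (a*x) * a := by
    funext x; exact (hF' x).deriv
  have SC : StrictConcaveOn ℝ (Set.Icc (0:ℝ) (1/2)) F := by
    apply strictConcaveOn_of_deriv2_neg (convex_Icc _ _)
    · exact Continuous.continuousOn (by fun_prop)
    · intro x hx
      rw [interior_Icc, Set.mem_Ioo] at hx
      obtain ⟨hx0, hx1⟩ := hx
      have hD2 : HasDerivAt (deriv F)
          (c * (-Real.sin (π*x) * π * π) - -Real.sin (a*x) * a * a) x := by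
        rw [hderivF]
        have hπx : HasDerivAt (fun y : ℝ => π * y) π x := by
          simpa using (hasDerivAt_id x).const_mul π
        have hax : HasDerivAt (fun y : ℝ => a * y) a x := by
          simpa using (hasDerivAt_id x).const_mul a
        have h1 := (((Real.hasDerivAt_cos (π*x)).comp x hπx).mul_const π).const_mul c
        have h2 := ((Real.hasDerivAt_cos (a*x)).comp x hax).mul_const a
        simpa [mul_comm, mul_assoc, mul_left_comm, Pi.sub_def] using h1.sub h2
      simp only [Function.iterate_succ, Function.iterate_zero, Function.comp_apply, id_eq]
      rw [hD2.deriv]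
      have hsπ : 0 < Real.sin (π*x) := Real.sin_pos_of_pos_of_lt_pi (by positivity) (by nlinarith)
      have hsa0 : 0 ≤ Real.sin (a*x) := Real.sin_nonneg_of_nonneg_of_le_pi (by positivity) (by nlinarith)
      have hle : Real.sin (a*x) ≤ Real.sin (π*x) := by
        apply Real.strictMonoOn_sin.monotoneOn ⟨by nlinarith, by nlinarith⟩
          ⟨by nlinarith, by nlinarith⟩ (by nlinarith)
      have h1 : a * a < (π*c) * (π*c) := mul_lt_mul'' hapc hapc ha.le ha.le
      have haa : a^2 < π^2 * c := by nlinarith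
      have h2 : a^2 * Real.sin (a*x) ≤ a^2 * Real.sin (π*x) :=
        mul_le_mul_of_nonneg_left hle (sq_nonneg a)
      have h3 : a^2 * Real.sin (π*x) < (π^2*c) * Real.sin (π*x) :=
        mul_lt_mul_of_pos_right haa hsπ
      nlinarith
  have hx : (0:ℝ) ∈ Set.Icc (0:ℝ) (1/2) := by norm_num
  have hy : (1/2:ℝ) ∈ Set.Icc (0:ℝ) (1/2) := by norm_num
  have h := SC.2 hx hy (by norm_num) (by linarith : (0:ℝ) < 1 - 2*v)
    (by linarith : (0:ℝ) < 2*v) (by ring : (1 - 2*v) + 2*v = 1)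
  have e1 : ((1 - 2*v) • (0:ℝ) + (2*v) • (1/2:ℝ)) = v := by
    simp [smul_eq_mul]; ring
  rw [e1] at h
  have hF0 : F 0 = 0 := by simp [hF]
  have hFh : F (1/2) = 0 := by
    simp only [hF]
    rw [show π * (1/2) = π/2 by ring, show a * (1/2) = a/2 by ring,
      Real.sin_pi_div_two, hhalf]
    ring
  rw [hF0, hFh] at h
  simp only [smul_eq_mul, mul_zero, add_zero, hF] at h
  linarith

lemma aux_sq_le {x c : ℝ} (hx : 0 ≤ x) (hc : 0 ≤ c) (h : x^2 ≤ c^2) : x ≤ c := by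
  nlinarith

lemma aux_sq_eq {x c : ℝ} (hx : 0 ≤ x) (hc : 0 ≤ c) (h : x^2 = c^2) : x = c :=
  le_antisymm (aux_sq_le hx hc h.le) (aux_sq_le hc hx h.ge)



theorem stmt_4 (θ : ℝ) (hθ : θ ∈ Set.Ioo 0 π) :
    (∀ z : ℂ, |z.im| ≤ 1/2 → ‖Phat θ z‖ ≤ Real.cos (θ/2)) ∧
    (∀ z : ℂ, |z.im| ≤ 1/2 →
      (‖Phat θ z‖ = Real.cos (θ/2) ↔ z = Complex.I/2 ∨ z = -(Complex.I/2))) := by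
  obtain ⟨hθ1, hθ2⟩ := hθ
  have hπ := Real.pi_pos
  set c := Real.cos (θ/2) with hcdef
  set a := π - θ with hadef
  have ha : 0 < a := by simp [hadef]; linarith
  have haπ : a < π := by simp [hadef]; linarith
  have hc0 : 0 < c := Real.cos_pos_of_mem_Ioo ⟨by linarith, by linarith⟩
  have hc1 : c ≤ 1 := Real.cos_le_one _
  have hchord : 1 - θ/π < c := by
    have h := chord (t := θ/2) (by linarith) (by linarith)
    have e : 2*(θ/2)/π = θ/π := by ring
    rw [e] at h; exact h
  have hapc : a < π * c := by
    have hd : θ/π*π = θ := div_mul_cancel₀ θ (ne_of_gt hπ)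
    nlinarith
  have hhalf : Real.sin (a/2) = c := by
    rw [show a/2 = π/2 - θ/2 by rw [hadef]; ring, Real.sin_pi_div_two_sub]
  have hzero_lt : (π - θ)/π < c := by
    rw [div_lt_iff₀ hπ]
    nlinarith [div_mul_cancel₀ θ (ne_of_gt hπ)]
  have habs0 : ‖Phat θ 0‖ = (π - θ)/π := by
    have hh : Phat θ 0 = (((π - θ)/π : ℝ) : ℂ) := by
      rw [Phat, if_pos rfl]; push_cast; ring
    rw [hh, Complex.norm_real, Real.norm_eq_abs]
    exact abs_of_nonneg (by positivity)
  -- master lemma for z ≠ 0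
  have master : ∀ z : ℂ, z ≠ 0 → |z.im| ≤ 1/2 →
      ‖Phat θ z‖ ≤ c ∧
      (‖Phat θ z‖ = c ↔ (z.re = 0 ∧ |z.im| = 1/2)) := by
    intro z hz0 hzim
    set u := z.re with hu
    set v := z.im with hv
    have hD : 0 < Real.sinh (π*u)^2 + Real.sin (π*v)^2 := by
      rcases eq_or_ne u 0 with h | h
      · have hvne : v ≠ 0 := by
          intro hv0
          exact hz0 (Complex.ext h hv0)
        have hsin : 0 < Real.sin (π*|v|) :=
          Real.sin_pos_of_pos_of_lt_pi (by positivity)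
            (by nlinarith [abs_nonneg v, abs_pos.2 hvne])
        have hsq : Real.sin (π*v)^2 = Real.sin (π*|v|)^2 := by
          rcases abs_cases v with ⟨h1, _⟩ | ⟨h1, _⟩ <;> rw [h1]
          rw [mul_neg, Real.sin_neg]; ring
        nlinarith [sq_nonneg (Real.sinh (π*u))]
      · have hs : Real.sinh (π*u) ≠ 0 := Real.sinh_ne_zero.2 (by
          intro hh
          exact h (by nlinarith [hh]))
        have : 0 < |Real.sinh (π*u)|^2 := pow_pos (abs_pos.2 hs) 2
        rw [_root_.sq_abs] at this
        nlinarith [sq_nonneg (Real.sin (π*v))]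
    have hre1 : ((π:ℂ)*z).re = π*u ∧ ((π:ℂ)*z).im = π*v := by
      constructor <;> simp [Complex.mul_re, Complex.mul_im, hu, hv]
    have hre2 : (((π:ℂ) - (θ:ℂ))*z).re = a*u ∧ (((π:ℂ) - (θ:ℂ))*z).im = a*v := by
      constructor <;> simp [Complex.mul_re, Complex.mul_im, hadef, hu, hv] <;> ring
    have hsinh_ne : Complex.sinh ((π:ℂ)*z) ≠ 0 := by
      intro hh
      have h2 := abs_sinh_sq ((π:ℂ)*z)
      rw [hh, hre1.1, hre1.2] at h2
      simp at h2
      nlinarith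
    have habs2 : ‖Phat θ z‖^2 =
        (Real.sinh (a*u)^2 + Real.sin (a*v)^2) / (Real.sinh (π*u)^2 + Real.sin (π*v)^2) := by
      rw [Phat, if_neg hz0, norm_div, div_pow, abs_sinh_sq, abs_sinh_sq,
        hre1.1, hre1.2, hre2.1, hre2.2]
    have hA : Real.sinh (a*u)^2 ≤ c^2 * Real.sinh (π*u)^2 ∧
        (Real.sinh (a*u)^2 = c^2 * Real.sinh (π*u)^2 ↔ u = 0) := by
      rcases eq_or_ne u 0 with h | h
      · simp [h]
      · have hlt := lemA ha hc0 hc1 hapc h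
        exact ⟨hlt.le, ⟨fun he => absurd he hlt.ne, fun h' => absurd h' h⟩⟩
    have hsqv : Real.sin (a*v)^2 = Real.sin (a*|v|)^2 ∧
        Real.sin (π*v)^2 = Real.sin (π*|v|)^2 := by
      rcases abs_cases v with ⟨h1, _⟩ | ⟨h1, _⟩ <;> rw [h1] <;> constructor <;>
        first
        | rfl
        | (rw [mul_neg, Real.sin_neg]; ring)
    have hB : Real.sin (a*v)^2 ≤ c^2 * Real.sin (π*v)^2 ∧
        (Real.sin (a*v)^2 = c^2 * Real.sin (π*v)^2 ↔ (v = 0 ∨ |v| = 1/2)) := by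
      rcases eq_or_ne v 0 with h | h
      · simp [h]
      · rcases eq_or_lt_of_le hzim with h2 | h2
        · -- |v| = 1/2
          have he : Real.sin (a*v)^2 = c^2 * Real.sin (π*v)^2 := by
            rw [hsqv.1, hsqv.2, h2]
            rw [show a*(1/2 : ℝ) = a/2 by ring, show π*(1/2 : ℝ) = π/2 by ring,
              Real.sin_pi_div_two, hhalf]
            ring
          exact ⟨he.le, by simp [he, h2]⟩
        · -- 0 < |v| < 1/2 : strict
          have h0 : 0 < |v| := abs_pos.2 h
          have hlt := lemB ha haπ hc0 hc1 hapc hhalf h0 h2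
          have hnn : 0 ≤ Real.sin (a*|v|) :=
            Real.sin_nonneg_of_nonneg_of_le_pi (by positivity) (by nlinarith)
          have hsq : Real.sin (a*|v|)^2 < c^2 * Real.sin (π*|v|)^2 := by
            have := pow_lt_pow_left₀ hlt hnn two_ne_zero
            calc Real.sin (a*|v|)^2 < (c * Real.sin (π*|v|))^2 := this
            _ = c^2 * Real.sin (π*|v|)^2 := by ring
          rw [← hsqv.1, ← hsqv.2] at hsq
          exact ⟨hsq.le, ⟨fun he => absurd he hsq.ne,
            fun h' => by rcases h' with h' | h' <;> [exact absurd h' h; exact absurd h' h2.ne]⟩⟩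
    have hNle : Real.sinh (a*u)^2 + Real.sin (a*v)^2 ≤
        c^2 * (Real.sinh (π*u)^2 + Real.sin (π*v)^2) := by nlinarith [hA.1, hB.1]
    have habs_le : ‖Phat θ z‖ ≤ c := by
      have h2 : ‖Phat θ z‖^2 ≤ c^2 := by
        rw [habs2, div_le_iff₀ hD]
        linarith [hNle]
      exact aux_sq_le (norm_nonneg _) hc0.le h2
    refine ⟨habs_le, ?_, ?_⟩
    · intro he
      have h2 : Real.sinh (a*u)^2 + Real.sin (a*v)^2 =
          c^2 * (Real.sinh (π*u)^2 + Real.sin (π*v)^2) := by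
        have : ‖Phat θ z‖^2 = c^2 := by rw [he]
        rw [habs2, div_eq_iff (ne_of_gt hD)] at this
        linarith [this]
      have e1 : Real.sinh (a*u)^2 = c^2 * Real.sinh (π*u)^2 := by nlinarith [hA.1, hB.1, h2]
      have e2 : Real.sin (a*v)^2 = c^2 * Real.sin (π*v)^2 := by nlinarith [hA.1, hB.1, h2]
      have hu0 : u = 0 := hA.2.1 e1
      refine ⟨hu0, ?_⟩
      rcases hB.2.1 e2 with h | h
      · exact absurd (Complex.ext hu0 h) hz0
      · exact h
    · rintro ⟨hre, him⟩
      have h2 : ‖Phat θ z‖^2 = c^2 := by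
        rw [habs2, hre]
        simp only [mul_zero, Real.sinh_zero]
        rw [hsqv.1, hsqv.2, him,
          show a*(1/2 : ℝ) = a/2 by ring, show π*(1/2 : ℝ) = π/2 by ring,
          Real.sin_pi_div_two, hhalf]
        norm_num
      exact aux_sq_eq (norm_nonneg _) hc0.le h2
  have hI2 : (Complex.I/2).re = 0 ∧ (Complex.I/2).im = 1/2 := by
    constructor <;> simp
  constructor
  · intro z hz
    rcases eq_or_ne z 0 with rfl | h0
    · rw [habs0]; linarith
    · exact (master z h0 hz).1
  · intro z hz
    rcases eq_or_ne z 0 with rfl | h0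
    · rw [habs0]
      constructor
      · intro h; exact absurd h (ne_of_lt hzero_lt)
      · rintro (h | h)
        · exact absurd h.symm (by simp [Complex.ext_iff])
        · exact absurd h.symm (by simp [Complex.ext_iff])
    · rw [(master z h0 hz).2]
      constructor
      · rintro ⟨hre, him⟩
        rcases (abs_eq (by norm_num)).1 him with h | h
        · left; apply Complex.ext <;> simp [hre, h]
        · right; apply Complex.ext <;> simp [hre, h]
      · rintro (rfl | rfl) <;> constructor <;> simp <;> norm_num
end

section
/- For θ ∈ (0, π) and all real x with x ≠ 0, one has |sinh((π−θ)(x + i/2))/sinh(π(x + i/2))| < cos(θ/2), and the value at x = 0 equals cos(θ/2). -/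
open Real Complex

lemma aux_abs_sinh_sq (s t : ℝ) :
    ‖Complex.sinh ((s : ℂ) + (t : ℂ) * Complex.I)‖ ^ 2
      = Real.sinh s ^ 2 + Real.sin t ^ 2 := by
  have h : Complex.sinh ((s : ℂ) + (t : ℂ) * Complex.I)
      = ((Real.sinh s * Real.cos t : ℝ) : ℂ) + ((Real.cosh s * Real.sin t : ℝ) : ℂ) * Complex.I := by
    rw [Complex.sinh_add, Complex.sinh_mul_I, Complex.cosh_mul_I, ← Complex.ofReal_sinh,
      ← Complex.ofReal_cosh, ← Complex.ofReal_sin, ← Complex.ofReal_cos]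
    push_cast; ring
  rw [h, Complex.sq_norm, Complex.normSq_add_mul_I]
  nlinarith [Real.cosh_sq s, Real.sin_sq_add_cos_sq t]

lemma aux_strictConvex_sinh : StrictConvexOn ℝ (Set.Ici (0 : ℝ)) Real.sinh := by
  apply strictConvexOn_of_deriv2_pos (convex_Ici 0) Real.continuous_sinh.continuousOn
  intro x hx
  rw [interior_Ici] at hx
  have : (deriv^[2]) Real.sinh = Real.sinh := by
    ext y
    simp [Function.iterate_succ, Real.deriv_sinh, Real.deriv_cosh]
  rw [this]
  exact Real.sinh_pos_iff.2 hx

theorem stmt_5 (θ : ℝ) (hθ : θ ∈ Set.Ioo 0 π) :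
    (∀ x : ℝ, x ≠ 0 →
      ‖Complex.sinh ((π - θ)*(x + Complex.I/2)) / Complex.sinh (π*(x + Complex.I/2))‖
        < Real.cos (θ/2)) ∧
    ‖Complex.sinh ((π - θ)*(0 + Complex.I/2)) / Complex.sinh (π*(0 + Complex.I/2))‖
        = Real.cos (θ/2) := by
  obtain ⟨hθ0, hθπ⟩ := hθ
  have hπ := Real.pi_pos
  set a : ℝ := π - θ with ha
  have ha0 : 0 < a := by simp only [ha]; linarith
  have haπ : a < π := by simp only [ha]; linarith
  have hc : Real.cos (θ/2) = Real.sin (a/2) := by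
    rw [ha, show (π - θ)/2 = π/2 - θ/2 by ring, Real.sin_pi_div_two_sub]
  have hcpos : 0 < Real.sin (a/2) :=
    Real.sin_pos_of_pos_of_lt_pi (by linarith) (by linarith)
  have hsin_gt : a / π < Real.sin (a/2) := by
    have h := Real.mul_lt_sin (x := a/2) (by linarith) (by linarith)
    calc a/π = 2/π * (a/2) := by field_simp
    _ < Real.sin (a/2) := h
  have hkey : ∀ u : ℝ, 0 < u → Real.sinh (a*u) < Real.sin (a/2) * Real.sinh (π*u) := by
    intro u hu
    have hπu : 0 < π * u := mul_pos hπ hu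
    have hb : 0 < a/π := div_pos ha0 hπ
    have hb1 : a/π < 1 := (div_lt_one hπ).2 haπ
    have h1 := aux_strictConvex_sinh.2 (Set.self_mem_Ici) (le_of_lt hπu)
      (ne_of_lt hπu) (show (0:ℝ) < 1 - a/π by linarith) hb (by ring)
    simp only [smul_eq_mul, mul_zero, Real.sinh_zero, zero_add] at h1
    have e : a/π*(π*u) = a*u := by field_simp
    rw [e] at h1
    calc Real.sinh (a*u) < a/π * Real.sinh (π*u) := h1
    _ < Real.sin (a/2) * Real.sinh (π*u) :=
      mul_lt_mul_of_pos_right hsin_gt (Real.sinh_pos_iff.2 hπu)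
  have hkey2 : ∀ x : ℝ, x ≠ 0 → Real.sinh (a*x)^2 < Real.sin (a/2)^2 * Real.sinh (π*x)^2 := by
    intro x hx
    rcases hx.lt_or_gt with h | h
    · have h1 := hkey (-x) (by linarith)
      have h2 : 0 < Real.sinh (a * -x) := Real.sinh_pos_iff.2 (by nlinarith)
      have e1 : Real.sinh (a * -x) = - Real.sinh (a*x) := by rw [mul_neg, Real.sinh_neg]
      have e2 : Real.sinh (π * -x) = - Real.sinh (π*x) := by rw [mul_neg, Real.sinh_neg]
      rw [e1, e2] at h1
      rw [e1] at h2
      nlinarith [h1, h2, hcpos]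
    · have h1 := hkey x h
      have h2 : 0 < Real.sinh (a * x) := Real.sinh_pos_iff.2 (by nlinarith)
      nlinarith
  constructor
  · intro x hx
    have e1 : ((π:ℂ) - (θ:ℂ))*((x:ℂ) + Complex.I/2)
        = ((a*x : ℝ) : ℂ) + ((a/2 : ℝ) : ℂ)*Complex.I := by
      simp only [ha]; push_cast; ring
    have e2 : (π:ℂ)*((x:ℂ) + Complex.I/2)
        = ((π*x : ℝ) : ℂ) + ((π/2 : ℝ) : ℂ)*Complex.I := by push_cast; ring
    rw [e1, e2, norm_div]
    have hN2 := aux_abs_sinh_sq (a*x) (a/2)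
    have hD2 : ‖Complex.sinh (((π*x : ℝ) : ℂ) + ((π/2 : ℝ) : ℂ)*Complex.I)‖ ^ 2
        = Real.sinh (π*x)^2 + 1 := by
      rw [aux_abs_sinh_sq, Real.sin_pi_div_two]; ring
    have hDpos : 0 < ‖Complex.sinh (((π*x : ℝ) : ℂ) + ((π/2 : ℝ) : ℂ)*Complex.I)‖ := by
      nlinarith [norm_nonneg (Complex.sinh (((π*x : ℝ) : ℂ) + ((π/2 : ℝ) : ℂ)*Complex.I)),
        sq_nonneg (Real.sinh (π*x))]
    rw [div_lt_iff₀ hDpos, hc]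
    apply lt_of_pow_lt_pow_left₀ 2
      (mul_nonneg hcpos.le (norm_nonneg _))
    rw [mul_pow, hN2, hD2]
    have := hkey2 x hx
    nlinarith
  · have e1 : ((π:ℂ) - (θ:ℂ))*((0:ℂ) + Complex.I/2) = ((a/2 : ℝ) : ℂ)*Complex.I := by
      simp only [ha]; push_cast; ring
    have e2 : (π:ℂ)*((0:ℂ) + Complex.I/2) = ((π/2 : ℝ) : ℂ)*Complex.I := by push_cast; ring
    rw [e1, e2, Complex.sinh_mul_I, Complex.sinh_mul_I, ← Complex.ofReal_sin, ← Complex.ofReal_sin,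
      Real.sin_pi_div_two, norm_div, hc]
    simp only [Complex.ofReal_one, one_mul, norm_mul, Complex.norm_I, Complex.norm_real, Real.norm_eq_abs, mul_one,
      norm_one, div_one]
    exact _root_.abs_of_nonneg hcpos.le
end

section
/- For θ ∈ (0, π), the Poisson kernel on the strip P_θ(τ) = (1/2π)·sin θ/(cosh τ − cos θ) satisfies ∫_ℝ P_θ(τ) dτ = (π − θ)/π. -/
/-! The function `F(τ) = arctan ((e^τ - cos θ) / sin θ) / π` is an antiderivative of the integrand,
because `2 e^τ (cosh τ - cos θ) = (e^τ - cos θ)² + sin² θ`. It increases from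
`arctan (-cot θ) / π = (θ - π/2) / π` at `-∞` to `1/2` at `+∞`, and a nonnegative derivative
is integrable, so the integral is the difference `(π - θ) / π`. -/

open Real MeasureTheory Filter Topology

theorem integrable_deriv_of_nonneg {g g' : ℝ → ℝ} {m n : ℝ}
    (hderiv : ∀ x, HasDerivAt g (g' x) x) (hg' : ∀ x, 0 ≤ g' x)
    (hbot : Tendsto g atBot (𝓝 m)) (htop : Tendsto g atTop (𝓝 n)) : Integrable g' := by
  have hint : ∀ a b, IntervalIntegrable g' volume a b := fun a b =>
    intervalIntegral.intervalIntegrable_deriv_of_nonneg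
      (continuous_iff_continuousAt.2 fun x => (hderiv x).continuousAt).continuousOn
      (fun x _ => hderiv x) (fun x _ => hg' x)
  have hnorm : ∀ b, ∫ x in -b..b, ‖g' x‖ = g b - g (-b) := fun b => by
    simp_rw [Real.norm_of_nonneg (hg' _)]
    exact intervalIntegral.integral_eq_sub_of_hasDerivAt (fun x _ => hderiv x) (hint _ _)
  refine integrable_of_intervalIntegral_norm_tendsto (n - m)
    (fun b => (hint (-b) b).1) tendsto_neg_atTop_atBot tendsto_id ?_
  simp_rw [hnorm]
  exact htop.sub (hbot.comp tendsto_neg_atTop_atBot)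

theorem integral_of_hasDerivAt_of_nonneg {g g' : ℝ → ℝ} {m n : ℝ}
    (hderiv : ∀ x, HasDerivAt g (g' x) x) (hg' : ∀ x, 0 ≤ g' x)
    (hbot : Tendsto g atBot (𝓝 m)) (htop : Tendsto g atTop (𝓝 n)) : ∫ x, g' x = n - m :=
  integral_of_hasDerivAt_of_tendsto hderiv (integrable_deriv_of_nonneg hderiv hg' hbot htop)
    hbot htop

theorem two_mul_exp_mul_cosh_sub_cos (x θ : ℝ) :
    2 * exp x * (cosh x - cos θ) = (exp x - cos θ) ^ 2 + sin θ ^ 2 := by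
  have hexp : exp x * exp (-x) = 1 := by rw [← exp_add, add_neg_cancel, exp_zero]
  rw [cosh_eq]
  linear_combination hexp - sin_sq_add_cos_sq θ

theorem cosh_sub_cos_pos {θ : ℝ} (hθ : sin θ ≠ 0) (x : ℝ) : 0 < cosh x - cos θ := by
  have h := two_mul_exp_mul_cosh_sub_cos x θ
  have : 0 < 2 * exp x * (cosh x - cos θ) := by rw [h]; positivity
  exact pos_of_mul_pos_right this (by positivity)

theorem hasDerivAt_arctan_exp_sub_cos_div_sin {θ : ℝ} (hθ : sin θ ≠ 0) (x : ℝ) :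
    HasDerivAt (fun x => arctan ((exp x - cos θ) / sin θ))
      (sin θ / (2 * (cosh x - cos θ))) x := by
  convert (((hasDerivAt_exp x).sub_const (cos θ)).div_const (sin θ)).arctan using 1
  have hden := (cosh_sub_cos_pos hθ x).ne'
  have hid := two_mul_exp_mul_cosh_sub_cos x θ
  field_simp
  linear_combination -hid

theorem tendsto_arctan_exp_sub_cos_div_sin_atTop {θ : ℝ} (hθ : 0 < sin θ) :
    Tendsto (fun x => arctan ((exp x - cos θ) / sin θ)) atTop (𝓝 (π / 2)) :=
  (tendsto_arctan_atTop.mono_right nhdsWithin_le_nhds).comp <|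
    (tendsto_atTop_add_const_right _ _ tendsto_exp_atTop).atTop_div_const hθ

theorem tendsto_arctan_exp_sub_cos_div_sin_atBot (θ : ℝ) :
    Tendsto (fun x => arctan ((exp x - cos θ) / sin θ)) atBot (𝓝 (arctan (-cos θ / sin θ))) := by
  simpa [Function.comp_def] using (continuous_arctan.tendsto _).comp
    ((tendsto_exp_atBot.sub_const (cos θ)).div_const (sin θ))

theorem arctan_neg_cos_div_sin {θ : ℝ} (h₀ : 0 < θ) (hπ : θ < π) :
    arctan (-cos θ / sin θ) = θ - π / 2 := by
  have htan : -cos θ / sin θ = tan (θ - π / 2) := by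
    rw [tan_eq_sin_div_cos, sin_sub_pi_div_two, cos_sub_pi_div_two]
  rw [htan, arctan_tan (by linarith) (by linarith)]

theorem stmt_6 (θ : ℝ) (hθ : θ ∈ Set.Ioo 0 π) :
    ∫ τ : ℝ, (1/(2*π)) * Real.sin θ / (Real.cosh τ - Real.cos θ) = (π - θ)/π := by
  obtain ⟨h₀, hπ⟩ := hθ
  have hsin : 0 < sin θ := sin_pos_of_pos_of_lt_pi h₀ hπ
  have hderiv : ∀ τ, HasDerivAt (fun x => arctan ((exp x - cos θ) / sin θ) / π)
      ((1/(2*π)) * sin θ / (cosh τ - cos θ)) τ := fun τ =>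
    ((hasDerivAt_arctan_exp_sub_cos_div_sin hsin.ne' τ).div_const π).congr_deriv (by field_simp)
  have hnonneg : ∀ τ, 0 ≤ (1/(2*π)) * sin θ / (cosh τ - cos θ) := fun τ => by
    have := cosh_sub_cos_pos hsin.ne' τ
    positivity
  rw [integral_of_hasDerivAt_of_nonneg hderiv hnonneg
    ((tendsto_arctan_exp_sub_cos_div_sin_atBot θ).div_const π)
    ((tendsto_arctan_exp_sub_cos_div_sin_atTop hsin).div_const π),
    arctan_neg_cos_div_sin h₀ hπ]
  field_simp
  ring
end

section
/- The map Ψ(τ, σ) = (sinh τ/(cosh τ − cos σ), −sin σ/(cosh τ − cos σ)) from the strip S = ℝ × (0, 2π) to ℝ² is injective, and its image is ℝ² \ {(x, 0) : |x| ≥ 1}. -/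
/-!
In complex notation `Ψ(τ, σ) = (v - 1) / (v + 1)` with `v = exp (τ + (σ - π) i)`, i.e.
`Ψ(τ, σ) = tanh ((τ + (σ - π) i) / 2)`. The shift `σ ↦ σ - π` carries the strip `S` onto
`{|Im w| < π}`, which `exp` maps bijectively onto the slit plane `ℂ \ (-∞, 0]`, and the Möbius map
`v ↦ (v - 1) / (v + 1)` (inverse `q ↦ (1 + q) / (1 - q)`) maps the slit plane bijectively onto
`ℂ \ ((-∞, -1] ∪ [1, ∞))`: on the real axis it is `c ↦ (c - 1) / (c + 1)`, which sends `(0, ∞)`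
onto `(-1, 1)`, and off the real axis it preserves the sign of the imaginary part.
-/

open Real

/-- The bipolar transform. -/
noncomputable def bipolar (p : ℝ × ℝ) : ℝ × ℝ :=
  (Real.sinh p.1 / (Real.cosh p.1 - Real.cos p.2),
   -Real.sin p.2 / (Real.cosh p.1 - Real.cos p.2))

open Complex Set

namespace Complex

def doubleSlitPlane : Set ℂ := {q | ¬(q.im = 0 ∧ 1 ≤ |q.re|)}

lemma re_sub_one_div_add_one (v : ℂ) :
    ((v - 1) / (v + 1)).re = (normSq v - 1) / normSq (v + 1) := by
  simp only [div_re, normSq_apply, sub_re, add_re, sub_im, add_im, one_re, one_im]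
  ring

lemma im_sub_one_div_add_one (v : ℂ) :
    ((v - 1) / (v + 1)).im = 2 * v.im / normSq (v + 1) := by
  simp only [div_im, normSq_apply, sub_re, add_re, sub_im, add_im, one_re, one_im]
  ring

lemma sub_one_div_add_one_mem_doubleSlitPlane_iff {v : ℂ} (hv : v ≠ -1) :
    (v - 1) / (v + 1) ∈ doubleSlitPlane ↔ v ∈ slitPlane := by
  have hN : 0 < normSq (v + 1) := normSq_pos.2 (by rwa [Ne, add_eq_zero_iff_eq_neg])
  obtain ⟨c, d⟩ := v
  simp only [doubleSlitPlane, mem_ofPred_eq, re_sub_one_div_add_one, im_sub_one_div_add_one,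
    mem_slitPlane_iff, div_eq_zero_iff, hN.ne', or_false, mul_eq_zero, two_ne_zero, false_or]
  rcases eq_or_ne d 0 with rfl | hd
  · simp only [normSq_apply, add_re, add_im, one_re, one_im, add_zero, mul_zero, true_and,
      not_le, ne_eq, not_true_eq_false, or_false] at hN ⊢
    rw [abs_div, abs_of_pos hN, div_lt_one hN, abs_lt]
    constructor
    · rintro ⟨h1, h2⟩
      nlinarith
    · intro hc
      constructor <;> nlinarith
  · simp [hd]

lemma bijOn_sub_one_div_add_one :
    BijOn (fun v : ℂ => (v - 1) / (v + 1)) slitPlane doubleSlitPlane := by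
  have hv1 {v : ℂ} (hv : v ∈ slitPlane) : v ≠ -1 := by
    rintro rfl
    norm_num [mem_slitPlane_iff] at hv
  have hq1 {q : ℂ} (hq : q ∈ doubleSlitPlane) : 1 - q ≠ 0 := by
    rintro hq1
    simp [doubleSlitPlane, ← sub_eq_zero.1 hq1] at hq
  have hgf {v : ℂ} (hv : v ∈ slitPlane) :
      (1 + (v - 1) / (v + 1)) / (1 - (v - 1) / (v + 1)) = v := by
    have : v + 1 ≠ 0 := by rw [Ne, add_eq_zero_iff_eq_neg]; exact hv1 hv
    field_simp
    ring
  have hfg {q : ℂ} (hq : q ∈ doubleSlitPlane) :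
      ((1 + q) / (1 - q) - 1) / ((1 + q) / (1 - q) + 1) = q := by
    have := hq1 hq
    field_simp
    ring
  refine InvOn.bijOn (f' := fun q => (1 + q) / (1 - q)) ⟨fun v hv => hgf hv, fun q hq => hfg hq⟩
    (fun v hv => (sub_one_div_add_one_mem_doubleSlitPlane_iff (hv1 hv)).2 hv) (fun q hq => ?_)
  have hg : (1 + q) / (1 - q) ≠ -1 := by
    rw [Ne, div_eq_iff (hq1 hq)]
    intro h
    have : (2 : ℂ) = 0 := by linear_combination h
    norm_num at this
  rw [← sub_one_div_add_one_mem_doubleSlitPlane_iff hg, hfg hq]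
  exact hq

end Complex

lemma bipolar_eq_sub_one_div_add_one_exp (p : ℝ × ℝ) :
    bipolar p = equivRealProd ((cexp ⟨p.1, p.2 - π⟩ - 1) / (cexp ⟨p.1, p.2 - π⟩ + 1)) := by
  obtain ⟨τ, σ⟩ := p
  set w : ℂ := cexp ⟨τ, σ - π⟩
  have hre : w.re = -(rexp τ * Real.cos σ) := by simp [w, exp_re, Real.cos_sub_pi]
  have him : w.im = -(rexp τ * Real.sin σ) := by simp [w, exp_im, Real.sin_sub_pi]
  have hnum : normSq w - 1 = 2 * rexp τ * Real.sinh τ := by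
    rw [normSq_apply, hre, him, Real.sinh_eq, Real.exp_neg]
    field_simp
    linear_combination (rexp τ) ^ 2 * Real.sin_sq_add_cos_sq σ
  have hden : normSq (w + 1) = 2 * rexp τ * (Real.cosh τ - Real.cos σ) := by
    rw [normSq_apply, add_re, add_im, hre, him, one_re, one_im, Real.cosh_eq, Real.exp_neg]
    field_simp
    linear_combination (rexp τ) ^ 2 * Real.sin_sq_add_cos_sq σ
  have h2e : 2 * rexp τ ≠ 0 := by positivity
  simp only [bipolar, equivRealProd_apply, re_sub_one_div_add_one, im_sub_one_div_add_one,
    hnum, hden, him, mul_div_mul_left _ _ h2e]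
  rw [show 2 * -(rexp τ * Real.sin σ) = 2 * rexp τ * -Real.sin σ by ring, mul_div_mul_left _ _ h2e]

lemma bijOn_shift_strip :
    BijOn (fun p : ℝ × ℝ => (⟨p.1, p.2 - π⟩ : ℂ)) (univ ×ˢ Ioo 0 (2 * π))
      {z : ℂ | z.im ∈ Ioo (-π) π} := by
  refine InvOn.bijOn (f' := fun z => (z.re, z.im + π)) ⟨fun p _ => by simp, fun z _ => by simp⟩
    (fun p hp => ?_) (fun z hz => ?_)
  · simp only [mem_prod, mem_Ioo] at hp
    simp only [mem_ofPred_eq, mem_Ioo]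
    constructor <;> linarith
  · simp only [mem_ofPred_eq, mem_Ioo] at hz
    simp only [mem_prod, mem_univ, mem_Ioo, true_and]
    constructor <;> linarith

lemma bijOn_bipolar :
    BijOn bipolar (univ ×ˢ Ioo 0 (2 * π)) {q : ℝ × ℝ | ¬(q.2 = 0 ∧ 1 ≤ |q.1|)} := by
  have hreal : BijOn equivRealProd doubleSlitPlane {q : ℝ × ℝ | ¬(q.2 = 0 ∧ 1 ≤ |q.1|)} :=
    equivRealProd.bijOn fun _ => Iff.rfl
  refine (hreal.comp (bijOn_sub_one_div_add_one.comp
    (expOpenPartialHomeomorph.bijOn.comp bijOn_shift_strip))).congr fun p _ => ?_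
  exact (bipolar_eq_sub_one_div_add_one_exp p).symm

theorem stmt_12 :
    Set.InjOn bipolar (Set.univ ×ˢ Set.Ioo 0 (2*π)) ∧
    bipolar '' (Set.univ ×ˢ Set.Ioo 0 (2*π))
      = {q : ℝ × ℝ | ¬ (q.2 = 0 ∧ 1 ≤ |q.1|)} :=
  ⟨bijOn_bipolar.injOn, bijOn_bipolar.image_eq⟩
end

section
/- For θ ∈ (0, π), for every z₀ in the open strip {|Im z| < 1/2} and λ = (sinh(θ·z₀)/sinh(π·z₀))² (the square of P̂_{π−θ}(z₀)), one has |λ| < sin²(θ/2). -/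
open Real Complex

lemma jordan {θ : ℝ} (h0 : 0 < θ) (hπ : θ < π) : θ < π * Real.sin (θ/2) := by
  have hπ0 := Real.pi_pos
  have hx0 : (0:ℝ) ∈ Set.Icc 0 π := ⟨le_refl _, le_of_lt hπ0⟩
  have hx1 : (π/2) ∈ Set.Icc 0 π := ⟨by positivity, by linarith⟩
  have ht0 : 0 < θ/π := by positivity
  have ht1 : θ/π < 1 := (div_lt_one hπ0).2 hπ
  have hne : (0:ℝ) ≠ π/2 := ne_of_lt (by positivity)
  have h := strictConcaveOn_sin_Icc.2 hx0 hx1 hne (show (0:ℝ) < 1 - θ/π by linarith)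
    ht0 (show (1-θ/π) + θ/π = 1 by ring)
  simp only [smul_eq_mul, Real.sin_zero, mul_zero, zero_add] at h
  have he : θ / π * (π / 2) = θ/2 := by field_simp
  rw [he, Real.sin_pi_div_two, mul_one] at h
  calc θ = π * (θ/π) := by field_simp
    _ < π * Real.sin (θ/2) := mul_lt_mul_of_pos_left h hπ0

lemma sinh_mul_le {c x : ℝ} (hc0 : 0 ≤ c) (hc1 : c ≤ 1) (hx : 0 ≤ x) :
    Real.sinh (c*x) ≤ c * Real.sinh x := by
  have hd : ∀ y : ℝ, HasDerivAt (fun t => c * Real.sinh t - Real.sinh (c*t))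
      (c * Real.cosh y - c * Real.cosh (c*y)) y := by
    intro y
    have h1 : HasDerivAt (fun t : ℝ => c * t) (c * 1) y := (hasDerivAt_id y).const_mul c
    have h2 : HasDerivAt (fun t : ℝ => Real.sinh (c*t)) (Real.cosh (c*y) * (c*1)) y :=
      (Real.hasDerivAt_sinh (c*y)).comp y h1
    have h3 := ((Real.hasDerivAt_sinh y).const_mul c).sub h2
    rw [show c * Real.cosh y - c * Real.cosh (c*y) = c * Real.cosh y - Real.cosh (c*y) * (c*1) by ring]; exact h3
  have hmono : MonotoneOn (fun t => c * Real.sinh t - Real.sinh (c*t)) (Set.Ici (0:ℝ)) := by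
    apply monotoneOn_of_deriv_nonneg (convex_Ici 0)
    · exact (continuous_const.mul Real.continuous_sinh).sub
        (Real.continuous_sinh.comp (continuous_const.mul continuous_id)) |>.continuousOn
    · intro y _
      exact ((hd y).differentiableAt).differentiableWithinAt
    · intro y hy
      rw [interior_Ici] at hy
      rw [(hd y).deriv]
      have hcy : Real.cosh (c*y) ≤ Real.cosh y := by
        rw [Real.cosh_le_cosh]
        rw [_root_.abs_of_nonneg (mul_nonneg hc0 (le_of_lt hy)), _root_.abs_of_nonneg (le_of_lt hy)]
        nlinarith [(le_of_lt (Set.mem_Ioi.1 hy))]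
      nlinarith
  have h0 : (0:ℝ) ∈ Set.Ici (0:ℝ) := Set.self_mem_Ici
  have := hmono h0 (Set.mem_Ici.2 hx) hx
  simp at this
  linarith

lemma hasDerivAt_sin_mul (a t : ℝ) :
    HasDerivAt (fun x => Real.sin (a*x)) (a * Real.cos (a*t)) t := by
  have h1 : HasDerivAt (fun x : ℝ => a * x) (a * 1) t := (hasDerivAt_id t).const_mul a
  have h2 := (Real.hasDerivAt_sin (a*t)).comp t h1
  rw [show a * Real.cos (a*t) = Real.cos (a*t) * (a*1) by ring]; exact h2

lemma hasDerivAt_cos_mul (a t : ℝ) :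
    HasDerivAt (fun x => Real.cos (a*x)) (-(a * Real.sin (a*t))) t := by
  have h1 : HasDerivAt (fun x : ℝ => a * x) (a * 1) t := (hasDerivAt_id t).const_mul a
  have h2 := (Real.hasDerivAt_cos (a*t)).comp t h1
  rw [show -(a * Real.sin (a*t)) = -Real.sin (a*t) * (a*1) by ring]; exact h2

lemma sin_key {θ u : ℝ} (h0 : 0 < θ) (hπ : θ < π) (hu0 : 0 < u) (hu : u < 1/2) :
    Real.sin (θ*u) < Real.sin (θ/2) * Real.sin (π*u) := by
  have hπ0 := Real.pi_pos
  set c := Real.sin (θ/2) with hc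
  have hc0 : 0 < c := Real.sin_pos_of_pos_of_lt_pi (by linarith) (by linarith)
  have hc1 : c ≤ 1 := Real.sin_le_one _
  have hθπ : θ < π * c := jordan h0 hπ
  set ψ : ℝ → ℝ := fun t => c * Real.sin (π*t) - Real.sin (θ*t) with hψ
  have hd1 : deriv ψ = fun t => c * (π * Real.cos (π*t)) - θ * Real.cos (θ*t) := by
    funext t
    exact (((hasDerivAt_sin_mul π t).const_mul c).sub (hasDerivAt_sin_mul θ t)).deriv
  have hconc : StrictConcaveOn ℝ (Set.Icc (0:ℝ) (1/2)) ψ := by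
    apply strictConcaveOn_of_deriv2_neg (convex_Icc _ _)
    · exact ((continuous_const.mul (Real.continuous_sin.comp (continuous_const.mul continuous_id))).sub
        (Real.continuous_sin.comp (continuous_const.mul continuous_id))).continuousOn
    · intro x hx
      rw [interior_Icc] at hx
      obtain ⟨hx0, hx1⟩ := hx
      have h2 : deriv (deriv ψ) x = c * (π * -(π * Real.sin (π*x))) - θ * -(θ * Real.sin (θ*x)) := by
        rw [hd1]
        exact ((((hasDerivAt_cos_mul π x).const_mul π).const_mul c).sub
          ((hasDerivAt_cos_mul θ x).const_mul θ)).deriv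
      have : deriv^[2] ψ x = deriv (deriv ψ) x := by
        simp [Function.iterate_succ, Function.iterate_zero, Function.comp]
      rw [this, h2]
      have hsπ : 0 < Real.sin (π*x) := Real.sin_pos_of_pos_of_lt_pi (by positivity) (by nlinarith)
      have hsθ0 : 0 ≤ Real.sin (θ*x) := Real.sin_nonneg_of_nonneg_of_le_pi (by positivity) (by nlinarith)
      have hsle : Real.sin (θ*x) ≤ Real.sin (π*x) :=
        Real.sin_le_sin_of_le_of_le_pi_div_two (by nlinarith) (by nlinarith) (by nlinarith)
      have k1 : θ^2 * Real.sin (θ*x) ≤ θ^2 * Real.sin (π*x) :=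
        mul_le_mul_of_nonneg_left hsle (sq_nonneg θ)
      have k2 : θ^2 * Real.sin (π*x) < π^2*c^2 * Real.sin (π*x) :=
        mul_lt_mul_of_pos_right (by nlinarith) hsπ
      have k3 : π^2*c^2 * Real.sin (π*x) ≤ π^2*c * Real.sin (π*x) :=
        mul_le_mul_of_nonneg_right
          (by nlinarith [mul_nonneg (mul_nonneg (mul_pos hπ0 hπ0).le hc0.le) (sub_nonneg.2 hc1)]) hsπ.le
      nlinarith
  have h0m : (0:ℝ) ∈ Set.Icc (0:ℝ) (1/2) := by constructor <;> norm_num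
  have h1m : (1/2:ℝ) ∈ Set.Icc (0:ℝ) (1/2) := by constructor <;> norm_num
  have key := hconc.2 h0m h1m (by norm_num) (show (0:ℝ) < 1 - 2*u by linarith)
    (show (0:ℝ) < 2*u by linarith) (by ring)
  have hval : (1-2*u) • (0:ℝ) + (2*u) • (1/2:ℝ) = u := by simp; ring
  rw [hval] at key
  have hψ0 : ψ 0 = 0 := by simp [hψ]
  have hψh : ψ (1/2) = 0 := by
    simp only [hψ]
    rw [show π * (1/2) = π/2 by ring, Real.sin_pi_div_two, show θ * (1/2) = θ/2 by ring]
    ring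
  rw [hψ0, hψh] at key
  simp at key
  simp only [hψ] at key
  linarith

lemma sinh_sq_lt {θ s : ℝ} (h0 : 0 < θ) (hπ : θ < π) (hs : s ≠ 0) :
    Real.sinh (θ*s)^2 < Real.sin (θ/2)^2 * Real.sinh (π*s)^2 := by
  have hπ0 := Real.pi_pos
  have hc0 : 0 < Real.sin (θ/2) := Real.sin_pos_of_pos_of_lt_pi (by linarith) (by linarith)
  have hc1 : Real.sin (θ/2) ≤ 1 := Real.sin_le_one _
  wlog hs' : 0 < s generalizing s
  · push_neg at hs'
    have hneg : 0 < -s := by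
      rcases lt_or_eq_of_le hs' with h | h
      · linarith
      · exact absurd h hs
    have := this (neg_ne_zero.2 hs) hneg
    have e1 : θ * -s = -(θ*s) := by ring
    have e2 : π * -s = -(π*s) := by ring
    rw [e1, e2, Real.sinh_neg, Real.sinh_neg, neg_sq, neg_sq] at this
    exact this
  have key : Real.sinh (θ*s) < Real.sin (θ/2) * Real.sinh (π*s) := by
    have h1 : Real.sinh (θ*s) < Real.sinh (Real.sin (θ/2)*(π*s)) := by
      rw [Real.sinh_lt_sinh]
      nlinarith [jordan h0 hπ]
    have h2 := sinh_mul_le hc0.le hc1 (by positivity : (0:ℝ) ≤ π*s)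
    linarith
  have hpos : 0 < Real.sinh (θ*s) := by
    rw [Real.sinh_pos_iff]; positivity
  calc Real.sinh (θ*s)^2 < (Real.sin (θ/2) * Real.sinh (π*s))^2 := by
        apply pow_lt_pow_left₀ key hpos.le (by norm_num)
    _ = Real.sin (θ/2)^2 * Real.sinh (π*s)^2 := by ring

lemma sin_sq_lt {θ u : ℝ} (h0 : 0 < θ) (hπ : θ < π) (hu : u ≠ 0) (hu2 : |u| < 1/2) :
    Real.sin (θ*u)^2 < Real.sin (θ/2)^2 * Real.sin (π*u)^2 := by
  have hπ0 := Real.pi_pos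
  wlog hu' : 0 < u generalizing u
  · push_neg at hu'
    have hneg : 0 < -u := by
      rcases lt_or_eq_of_le hu' with h | h
      · linarith
      · exact absurd h hu
    have := this (neg_ne_zero.2 hu) (by rwa [abs_neg]) hneg
    have e1 : θ * -u = -(θ*u) := by ring
    have e2 : π * -u = -(π*u) := by ring
    rw [e1, e2, Real.sin_neg, Real.sin_neg, neg_sq, neg_sq] at this
    exact this
  have hu12 : u < 1/2 := by rwa [_root_.abs_of_pos hu'] at hu2
  have key := sin_key h0 hπ hu' hu12
  have hpos : 0 ≤ Real.sin (θ*u) :=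
    Real.sin_nonneg_of_nonneg_of_le_pi (by positivity) (by nlinarith)
  calc Real.sin (θ*u)^2 < (Real.sin (θ/2) * Real.sin (π*u))^2 := by
        apply pow_lt_pow_left₀ key hpos (by norm_num)
    _ = Real.sin (θ/2)^2 * Real.sin (π*u)^2 := by ring

lemma normSq_sinh' (z : ℂ) :
    Complex.normSq (Complex.sinh z) = Real.sinh z.re ^ 2 + Real.sin z.im ^ 2 := by
  have h : Complex.sinh z =
      (Real.sinh z.re * Real.cos z.im : ℝ) + (Real.cosh z.re * Real.sin z.im : ℝ) * Complex.I := by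
    conv_lhs => rw [← Complex.re_add_im z]
    rw [Complex.sinh_add, Complex.cosh_mul_I, Complex.sinh_mul_I,
      ← Complex.ofReal_sinh, ← Complex.ofReal_cos, ← Complex.ofReal_cosh, ← Complex.ofReal_sin]
    push_cast
    ring
  rw [h, Complex.normSq_apply]
  simp [Complex.sinh_ofReal_re, Complex.cos_ofReal_re, Complex.sin_ofReal_re, Complex.cosh_ofReal_re]
  nlinarith [Real.sin_sq_add_cos_sq z.im, Real.cosh_sq z.re]

theorem stmt_19 (θ : ℝ) (hθ : θ ∈ Set.Ioo 0 π) (z₀ : ℂ) (hz₀ : |z₀.im| < 1/2) :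
    ‖((if z₀ = 0 then ((θ/π : ℝ) : ℂ)
        else Complex.sinh (θ * z₀) / Complex.sinh (π * z₀))^2)‖
      < Real.sin (θ/2)^2 := by
  obtain ⟨h0, hπ⟩ := hθ
  have hπ0 := Real.pi_pos
  have hc0 : 0 < Real.sin (θ/2) := Real.sin_pos_of_pos_of_lt_pi (by linarith) (by linarith)
  by_cases hz : z₀ = 0
  · rw [if_pos hz, norm_pow, Complex.norm_real, Real.norm_eq_abs, _root_.abs_of_nonneg (by positivity)]
    have hlt : θ/π < Real.sin (θ/2) := (div_lt_iff₀ hπ0).2 (by nlinarith [jordan h0 hπ])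
    exact pow_lt_pow_left₀ hlt (by positivity) (by norm_num)
  · rw [if_neg hz, norm_pow, Complex.sq_norm, Complex.normSq_div, normSq_sinh', normSq_sinh']
    have hre : ∀ a : ℝ, ((a:ℂ) * z₀).re = a * z₀.re := by
      intro a; simp [Complex.mul_re]
    have him : ∀ a : ℝ, ((a:ℂ) * z₀).im = a * z₀.im := by
      intro a; simp [Complex.mul_im]
    rw [hre, hre, him, him]
    set s := z₀.re
    set u := z₀.im
    have hsun : s ≠ 0 ∨ u ≠ 0 := by
      by_contra h
      push_neg at h
      exact hz (Complex.ext h.1 h.2)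
    have hden : 0 < Real.sinh (π*s)^2 + Real.sin (π*u)^2 := by
      rcases eq_or_ne s 0 with hs | hs
      · have hu : u ≠ 0 := by
          rcases hsun with h | h
          · exact absurd hs h
          · exact h
        have hb := abs_lt.1 hz₀
        have : Real.sin (π*u) ≠ 0 := by
          rcases lt_or_gt_of_ne hu with h | h
          · have hp : 0 < Real.sin (π * -u) :=
              Real.sin_pos_of_pos_of_lt_pi (by nlinarith [hb.1]) (by nlinarith [hb.1])
            rw [mul_neg, Real.sin_neg] at hp
            intro hq
            rw [hq] at hp
            simp at hp
          · exact ne_of_gt (Real.sin_pos_of_pos_of_lt_pi (by nlinarith [hb.2]) (by nlinarith [hb.2]))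
        positivity
      · have : Real.sinh (π*s) ≠ 0 := by
          rw [Real.sinh_ne_zero]
          exact mul_ne_zero (ne_of_gt hπ0) hs
        positivity
    rw [div_lt_iff₀ hden, mul_add]
    rcases eq_or_ne s 0 with hs | hs
    · have hu : u ≠ 0 := by
        rcases hsun with h | h
        · exact absurd hs h
        · exact h
      have hB := sin_sq_lt h0 hπ hu hz₀
      rw [hs]
      simp only [mul_zero, Real.sinh_zero]
      nlinarith
    · have hA := sinh_sq_lt h0 hπ hs
      rcases eq_or_ne u 0 with hu | hu
      · rw [hu]
        simp only [mul_zero, Real.sin_zero]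
        nlinarith
      · have hB := sin_sq_lt h0 hπ hu hz₀
        nlinarith
end
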